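/- arXiv:2110.14136 — 3 statements merged into one kernel-verified Lean document; each statement's English description precedes it below -/
import Mathlib

section
/- Assuming that every odd integer n ≥ 9 can be written as n = 1 + p + q with p, q distinct primes, 5 is the only odd untouchable number: for every odd n ≠ 5 there exists m with s(m) = n. -/
/-!
For a product of two distinct primes, `s (p * q) = (1 + p) * (1 + q) - p * q = 1 + p + q`, so the
hypothesis realises every odd `n ≥ 9` as an aliquot sum. The odd numbers below `9` other than `5`
are `1, 3, 7`, the aliquot sums `s (2 ^ k) = 2 ^ k - 1` of `2, 4, 8`.
-/

/-- Sum of proper divisors. -/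
def s (n : ℕ) : ℕ := ArithmeticFunction.sigma 1 n - n

open ArithmeticFunction
open scoped ArithmeticFunction.sigma

lemma sigma_one_mul_of_prime_of_ne {p q : ℕ} (hp : p.Prime) (hq : q.Prime) (hpq : p ≠ q) :
    σ 1 (p * q) = (1 + p) * (1 + q) := by
  rw [isMultiplicative_sigma.map_mul_of_coprime ((Nat.coprime_primes hp hq).mpr hpq),
    sigma_one_apply, sigma_one_apply, hp.divisors, hq.divisors,
    Finset.sum_pair hp.one_lt.ne, Finset.sum_pair hq.one_lt.ne]

lemma s_mul_of_prime_of_ne {p q : ℕ} (hp : p.Prime) (hq : q.Prime) (hpq : p ≠ q) :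
    s (p * q) = 1 + p + q := by
  rw [s, sigma_one_mul_of_prime_of_ne hp hq hpq]
  ring_nf
  omega

lemma s_two_pow (k : ℕ) : s (2 ^ k) = 2 ^ k - 1 := by
  rw [s, sigma_one_apply_prime_pow Nat.prime_two, Nat.geomSum_eq le_rfl, pow_succ]
  omega

lemma Odd.exists_eq_two_pow_sub_one_of_lt_nine {n : ℕ} (hodd : Odd n) (h9 : n < 9) (h5 : n ≠ 5) :
    ∃ k, n = 2 ^ k - 1 := by
  obtain ⟨j, rfl⟩ := hodd
  have : j = 0 ∨ j = 1 ∨ j = 3 := by omega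
  rcases this with rfl | rfl | rfl
  exacts [⟨1, rfl⟩, ⟨2, rfl⟩, ⟨3, rfl⟩]

theorem five_only_odd_untouchable
    (goldbach : ∀ n : ℕ, Odd n → 9 ≤ n →
      ∃ p q : ℕ, p.Prime ∧ q.Prime ∧ p ≠ q ∧ n = 1 + p + q) :
    ∀ n : ℕ, Odd n → n ≠ 5 → ∃ m : ℕ, s m = n := by
  intro n hodd h5
  by_cases h9 : 9 ≤ n
  · obtain ⟨p, q, hp, hq, hpq, rfl⟩ := goldbach n hodd h9
    exact ⟨p * q, s_mul_of_prime_of_ne hp hq hpq⟩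
  · obtain ⟨k, rfl⟩ := hodd.exists_eq_two_pow_sub_one_of_lt_nine (by omega) h5
    exact ⟨2 ^ k, s_two_pow k⟩
end

section
/- The number 160154 has at least 15 preimages under s; in particular s(152776) = s(183016) = s(251614) = s(260182) = s(296074) = s(298234) = s(302842) = s(310942) = s(311086) = s(312166) = s(313822) = s(313966) = s(315082) = s(315226) = s(315262) = 160154. -/
open ArithmeticFunction
open scoped ArithmeticFunction.sigma

theorem sigma_one_mul_prime {m p : ℕ} (hp : p.Prime) (hpm : ¬p ∣ m) :
    σ 1 (m * p) = σ 1 m * (p + 1) := by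
  rw [isMultiplicative_sigma.map_mul_of_coprime (hp.coprime_iff_not_dvd.mpr hpm).symm,
    ← pow_one p, sigma_one_apply_prime_pow hp, Finset.sum_range_succ, Finset.sum_range_one]
  ring

theorem s_two_mul_prime_mul_prime {p q : ℕ} (hp : p.Prime) (hq : q.Prime) (h2p : 2 < p)
    (hpq : p < q) : s (2 * p * q) = 3 * (p + 1) * (q + 1) - 2 * p * q := by
  have hp2 : ¬p ∣ 2 := fun h => by linarith [Nat.le_of_dvd two_pos h]
  have hqp : ¬q ∣ 2 * p := by
    rw [hq.dvd_mul, Nat.prime_dvd_prime_iff_eq hq hp, Nat.prime_dvd_prime_iff_eq hq Nat.prime_two]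
    omega
  rw [s, sigma_one_mul_prime hq hqp, sigma_one_mul_prime hp hp2, ← one_mul 2,
    sigma_one_mul_prime Nat.prime_two (by norm_num), sigma_one]

theorem s_152776 : s 152776 = 160154 := by
  rw [s, show 152776 = 2 ^ 3 * 13 ^ 2 * 113 by norm_num,
    sigma_one_mul_prime (by norm_num) (by norm_num),
    isMultiplicative_sigma.map_mul_of_coprime (by norm_num),
    sigma_one_apply_prime_pow Nat.prime_two, sigma_one_apply_prime_pow (by norm_num)]
  simp [Finset.sum_range_succ]

theorem s_183016 : s 183016 = 160154 := by
  rw [s, show 183016 = 2 ^ 3 * 22877 by norm_num, sigma_one_mul_prime (by norm_num) (by norm_num),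
    sigma_one_apply_prime_pow Nat.prime_two]
  simp [Finset.sum_range_succ]

theorem preimages_160154 :
    s 152776 = 160154 ∧ s 183016 = 160154 ∧ s 251614 = 160154 ∧ s 260182 = 160154 ∧
    s 296074 = 160154 ∧ s 298234 = 160154 ∧ s 302842 = 160154 ∧ s 310942 = 160154 ∧
    s 311086 = 160154 ∧ s 312166 = 160154 ∧ s 313822 = 160154 ∧ s 313966 = 160154 ∧
    s 315082 = 160154 ∧ s 315226 = 160154 ∧ s 315262 = 160154 := by
  -- `s (2 * 11 * 11437) = 3 * 12 * 11438 - 2 * 11 * 11437` unifies with `s 251614 = 160154`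
  -- by numeral evaluation.
  refine ⟨s_152776, s_183016,
    s_two_mul_prime_mul_prime (p := 11) (q := 11437) ?_ ?_ ?_ ?_,
    s_two_mul_prime_mul_prime (p := 13) (q := 10007) ?_ ?_ ?_ ?_,
    s_two_mul_prime_mul_prime (p := 37) (q := 4001) ?_ ?_ ?_ ?_,
    s_two_mul_prime_mul_prime (p := 41) (q := 3637) ?_ ?_ ?_ ?_,
    s_two_mul_prime_mul_prime (p := 53) (q := 2857) ?_ ?_ ?_ ?_,
    s_two_mul_prime_mul_prime (p := 107) (q := 1453) ?_ ?_ ?_ ?_,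
    s_two_mul_prime_mul_prime (p := 109) (q := 1427) ?_ ?_ ?_ ?_,
    s_two_mul_prime_mul_prime (p := 127) (q := 1229) ?_ ?_ ?_ ?_,
    s_two_mul_prime_mul_prime (p := 173) (q := 907) ?_ ?_ ?_ ?_,
    s_two_mul_prime_mul_prime (p := 179) (q := 877) ?_ ?_ ?_ ?_,
    s_two_mul_prime_mul_prime (p := 257) (q := 613) ?_ ?_ ?_ ?_,
    s_two_mul_prime_mul_prime (p := 277) (q := 569) ?_ ?_ ?_ ?_,
    s_two_mul_prime_mul_prime (p := 283) (q := 557) ?_ ?_ ?_ ?_⟩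
  all_goals norm_num
end

section
/- The number 208 is 2-untouchable: 208 is in the range of s, but there is no positive integer m with s(s(m)) = 208. -/
open Finset ArithmeticFunction
open scoped ArithmeticFunction.sigma

theorem Nat.sum_divisors_eq_sum_mul_self_le_add_sum_div (n : ℕ) :
    ∑ d ∈ n.divisors, d =
      ∑ d ∈ n.divisors with d * d ≤ n, d + ∑ d ∈ n.divisors with d * d < n, n / d := by
  have hswap : ∀ d ∈ n.divisors, n < n / d * (n / d) ↔ d * d < n := by
    intro d hd
    obtain ⟨⟨e, rfl⟩, hn⟩ := Nat.mem_divisors.1 hd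
    have hd0 : 0 < d := Nat.pos_of_ne_zero (left_ne_zero_of_mul hn)
    have he0 : 0 < e := Nat.pos_of_ne_zero (right_ne_zero_of_mul hn)
    rw [Nat.mul_div_cancel_left e hd0, Nat.mul_lt_mul_right he0, Nat.mul_lt_mul_left hd0]
  rw [← sum_filter_add_sum_filter_not n.divisors (fun d => d * d ≤ n)]
  congr 1
  calc ∑ d ∈ n.divisors with ¬d * d ≤ n, d
      = ∑ d ∈ n.divisors, if n < d * d then d else 0 := by
        rw [sum_filter]; simp only [not_le]
    _ = ∑ d ∈ n.divisors, if n < n / d * (n / d) then n / d else 0 :=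
        (Nat.sum_div_divisors n _).symm
    _ = ∑ d ∈ n.divisors with d * d < n, n / d := by
        rw [sum_filter]; exact sum_congr rfl fun d hd => if_congr (hswap d hd) rfl rfl

/-- Each divisor pair `{d, n / d}` is counted once, from its smaller member `d ≤ B`, so this
needs only `B + 1` trial divisions and is cheap enough for `decide`. -/
def sigmaPairs (B n : ℕ) : ℕ :=
  ∑ d ∈ range (B + 1), if d ∣ n ∧ d * d ≤ n then d + if d * d < n then n / d else 0 else 0

theorem sigmaPairs_eq_sigma_one {B n : ℕ} (hB : n ≤ B * B) : sigmaPairs B n = σ 1 n := by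
  rcases eq_or_ne n 0 with rfl | hn
  · simp [sigmaPairs]
  have hsmall :
      {d ∈ range (B + 1) | d ∣ n ∧ d * d ≤ n} = {d ∈ n.divisors | d * d ≤ n} := by
    ext d
    have : d * d ≤ n → d < B + 1 :=
      fun h => Nat.lt_succ_of_le (Nat.mul_self_le_mul_self_iff.1 (h.trans hB))
    simp only [mem_filter, mem_range, Nat.mem_divisors]
    tauto
  rw [sigma_one_apply, Nat.sum_divisors_eq_sum_mul_self_le_add_sum_div, sigmaPairs,
    ← sum_filter, hsmall, sum_add_distrib, ← sum_filter, filter_filter]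
  congr 2
  exact filter_congr fun d _ => ⟨And.right, fun h => ⟨h.le, h⟩⟩

theorem s_eq_sum_properDivisors (n : ℕ) : s n = ∑ d ∈ n.properDivisors, d := by
  rw [s, sigma_one_apply, Nat.sum_divisors_eq_sum_properDivisors_add_self, Nat.add_sub_cancel]

theorem s_mul_self_of_prime {p : ℕ} (hp : p.Prime) : s (p * p) = p + 1 := by
  rw [s_eq_sum_properDivisors, ← sq, Nat.properDivisors_prime_pow hp, sum_map]
  simp [sum_range_succ, add_comm]

theorem add_le_s {n a b : ℕ} (ha : a ∣ n) (hb : b ∣ n) (hab : a < b) (hbn : b < n) :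
    a + b ≤ s n := by
  rw [s_eq_sum_properDivisors, ← sum_pair (f := fun d => d) hab.ne]
  refine sum_le_sum_of_subset (insert_subset_iff.2 ⟨?_, singleton_subset_iff.2 ?_⟩)
  · exact Nat.mem_properDivisors.2 ⟨ha, hab.trans hbn⟩
  · exact Nat.mem_properDivisors.2 ⟨hb, hbn⟩

theorem succ_le_s_two_mul {m : ℕ} (hm : 2 ≤ m) : m + 1 ≤ s (2 * m) := by
  rw [add_comm]
  exact add_le_s (one_dvd _) (dvd_mul_left m 2) (by omega) (by omega)

theorem three_mul_le_s_mul_self {q : ℕ} (hq : 2 ≤ q) (hq' : ¬q.Prime) :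
    3 * q ≤ s (q * q) := by
  have hp := (Nat.not_prime_iff_minFac_lt hq).1 hq'
  have hp2 := (Nat.minFac_prime (by omega : q ≠ 1)).two_le
  calc 3 * q ≤ q + q.minFac * q := by nlinarith
    _ ≤ s (q * q) := add_le_s (dvd_mul_right q q) (mul_dvd_mul_right (Nat.minFac_dvd q) q)
        (by nlinarith) (by nlinarith)

theorem even_sigma_one_of_odd_of_not_isSquare {n : ℕ} (hodd : Odd n) (hsq : ¬IsSquare n) :
    Even (σ 1 n) := by
  have hfilter : {d ∈ n.divisors | d * d ≤ n} = {d ∈ n.divisors | d * d < n} :=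
    filter_congr fun d _ => by have : d * d ≠ n := fun h => hsq ⟨d, h.symm⟩; omega
  rw [sigma_one_apply, Nat.sum_divisors_eq_sum_mul_self_le_add_sum_div, hfilter,
    ← sum_add_distrib]
  refine even_sum _ fun d hd => ?_
  have hdvd := Nat.dvd_of_mem_divisors (mem_filter.1 hd).1
  exact (hodd.of_dvd_nat hdvd).add_odd (hodd.of_dvd_nat (Nat.div_dvd_of_dvd hdvd))

theorem odd_s_of_odd_of_not_isSquare {n : ℕ} (hodd : Odd n) (hsq : ¬IsSquare n) :
    Odd (s n) := by
  have := even_sigma_one_of_odd_of_not_isSquare hodd hsq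
  rw [sigma_one_apply, Nat.sum_divisors_eq_sum_properDivisors_add_self,
    ← s_eq_sum_properDivisors] at this
  grind

theorem le_two_mul_or_eq_mul_self_of_s_eq {n v : ℕ} (h : s n = v) (hv : Even v) (hv0 : v ≠ 0) :
    n ≤ 2 * v ∨ ∃ q, n = q * q ∧ (q.Prime ∧ q + 1 = v ∨ 3 * q ≤ v) := by
  have hn2 : 2 ≤ n := by
    by_contra! hn
    interval_cases n <;> exact hv0 (h ▸ by decide)
  rcases Nat.even_or_odd n with heven | hodd
  · left
    obtain ⟨m, rfl⟩ := even_iff_two_dvd.1 heven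
    by_cases hm : m = 1
    · omega
    · have := succ_le_s_two_mul (m := m) (by omega)
      omega
  · right
    obtain ⟨q, rfl⟩ : IsSquare n := by
      by_contra hsq
      exact Nat.not_even_iff_odd.2 (odd_s_of_odd_of_not_isSquare hodd hsq) (h ▸ hv)
    have hq : 2 ≤ q := by nlinarith
    by_cases hqp : q.Prime
    · exact ⟨q, rfl, .inl ⟨hqp, h ▸ (s_mul_self_of_prime hqp).symm⟩⟩
    · exact ⟨q, rfl, .inr (h ▸ three_mul_le_s_mul_self hq hqp)⟩

theorem of_s_eq_of_forall_sigmaPairs {v B : ℕ} {P : ℕ → Prop} (hv : Even v) (hv0 : v ≠ 0)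
    (hprime : ¬(v - 1).Prime) (hB : 2 * v ≤ B * B)
    (hsmall : ∀ n ≤ 2 * v, sigmaPairs B n - n = v → P n)
    (hsq : ∀ q ≤ v / 3, sigmaPairs (v / 3) (q * q) - q * q ≠ v) {n : ℕ} (h : s n = v) :
    P n := by
  rcases le_two_mul_or_eq_mul_self_of_s_eq h hv hv0 with hn | ⟨q, rfl, ⟨hq, hq1⟩ | hq⟩
  · rw [s, ← sigmaPairs_eq_sigma_one (hn.trans hB)] at h
    exact hsmall n hn h
  · obtain rfl : q = v - 1 := by omega
    exact absurd hq hprime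
  · rw [s, ← sigmaPairs_eq_sigma_one (B := v / 3) (Nat.mul_self_le_mul_self (by omega))] at h
    exact absurd h (hsq q (by omega))

theorem s_268 : s 268 = 208 := by decide

set_option maxRecDepth 40000 in
theorem eq_268_of_s_eq_208 {n : ℕ} (h : s n = 208) : n = 268 :=
  of_s_eq_of_forall_sigmaPairs (B := 21) (P := (· = 268)) (by decide) (by decide) (by norm_num)
    (by norm_num) (by decide) (by decide) h

set_option maxRecDepth 40000 in
theorem s_ne_268 (n : ℕ) : s n ≠ 268 :=
  of_s_eq_of_forall_sigmaPairs (B := 24) (P := fun _ => False) (by decide) (by decide)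
    (by norm_num) (by norm_num) (by decide) (by decide)

theorem two_untouchable_208 :
    (∃ m : ℕ, 0 < m ∧ s m = 208) ∧ ¬ ∃ m : ℕ, 0 < m ∧ s (s m) = 208 :=
  ⟨⟨268, by norm_num, s_268⟩, fun ⟨m, _, hm⟩ => s_ne_268 m (eq_268_of_s_eq_208 hm)⟩
end
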